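/- Let X be a compact metric space and let F be a nonempty family of continuous real-valued functions on X such that -f ∈ F whenever f ∈ F. For a finite Borel measure μ on X define Φ(μ) = sup_{f ∈ F} ∫ f dμ ∈ [0, ∞]. Then the following are equivalent: (a) the only finite Borel measure μ on X with ∫ f dμ = 0 for every f ∈ F is the zero measure; (b) there is a monotone increasing function φ : [0,∞) → [0,∞) with φ(0) = 0 such that μ(X) ≤ φ(Φ(μ)) for every finite Borel measure μ on X with Φ(μ) < ∞; (c) there is a constant c < ∞ such that μ(X) ≤ c · Φ(μ) for every finite Borel measure μ on X. -/

import Mathlib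

open MeasureTheory Filter
open scoped ENNReal NNReal Topology

/-!
All three conditions are equivalent to a positive lower bound for `Φ` on probability measures,
because `Φ(c • μ) = c Φ(μ)` and every nonzero finite measure is a multiple of a probability
measure. For (a), such a bound comes from compactness: on a compact space the probability
measures form a compact space in the weak topology, on which `Φ` is lower semicontinuous as a
supremum of continuous functions, so it attains its minimum at some `ν`. If that minimum
vanished, all `∫ f dν` with `f ∈ F` would vanish, since `F` is closed under negation.
-/

/-- The abstract "total first variation": `Φ(μ) = sup_{f ∈ F} ∫ f dμ ∈ [0, ∞]`,
for a family `F` of continuous functions closed under negation (so the sup is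
nonnegative, and taking `ENNReal.ofReal` of each integral does not change it). -/
noncomputable def Phi {X : Type*} [TopologicalSpace X] [MeasurableSpace X]
    (F : Set C(X, ℝ)) (μ : Measure X) : ℝ≥0∞ :=
  ⨆ f ∈ F, ENNReal.ofReal (∫ x, f x ∂μ)

section Scaling

variable {X : Type*} [TopologicalSpace X] [MeasurableSpace X] {F : Set C(X, ℝ)}

lemma Phi_smul (F : Set C(X, ℝ)) (μ : Measure X) {c : ℝ≥0∞} (hc : c ≠ ∞) :
    Phi F (c • μ) = c * Phi F μ := by
  simp only [Phi, ENNReal.mul_iSup, integral_smul_measure, smul_eq_mul,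
    ENNReal.ofReal_mul ENNReal.toReal_nonneg, ENNReal.ofReal_toReal hc]

lemma Phi_eq_zero_iff (hFneg : ∀ f ∈ F, -f ∈ F) (μ : Measure X) :
    Phi F μ = 0 ↔ ∀ f ∈ F, ∫ x, f x ∂μ = 0 := by
  simp only [Phi, ENNReal.iSup_eq_zero, ENNReal.ofReal_eq_zero]
  refine ⟨fun h f hf => le_antisymm (h f hf) ?_, fun h f hf => (h f hf).le⟩
  simpa [integral_neg] using h (-f) (hFneg f hf)

lemma measure_univ_le_mul_Phi_of_le_Phi {m : ℝ≥0} (hm : 0 < m)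
    (h : ∀ ν : Measure X, IsProbabilityMeasure ν → (m : ℝ≥0∞) ≤ Phi F ν)
    (μ : Measure X) [IsFiniteMeasure μ] :
    μ Set.univ ≤ (m⁻¹ : ℝ≥0) * Phi F μ := by
  rcases eq_or_ne μ 0 with rfl | hμ
  · simp
  have : NeZero μ := ⟨hμ⟩
  have hΦ : Phi F μ = μ Set.univ * Phi F ((μ Set.univ)⁻¹ • μ) := by
    rw [← Phi_smul F _ (measure_ne_top μ _), smul_smul,
      ENNReal.mul_inv_cancel (NeZero.ne _) (measure_ne_top μ _), one_smul]
  calc μ Set.univ = (m⁻¹ : ℝ≥0) * (m * μ Set.univ) := by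
        rw [← mul_assoc, ← ENNReal.coe_mul, inv_mul_cancel₀ hm.ne', ENNReal.coe_one, one_mul]
    _ ≤ (m⁻¹ : ℝ≥0) * Phi F μ := by
        rw [hΦ, mul_comm (m : ℝ≥0∞)]
        gcongr
        exact h _ inferInstance

/-- Rescaling `ν` to `Φ = 1` gives `Φ(ν)⁻¹ ≤ φ 1`; the `+ 1` keeps the bound positive. -/
lemma inv_le_Phi_of_measure_univ_le {φ : ℝ≥0 → ℝ≥0} (hφ0 : φ 0 = 0)
    (hφ : ∀ μ : Measure X, IsFiniteMeasure μ → Phi F μ ≠ ∞ →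
      μ Set.univ ≤ (φ (Phi F μ).toNNReal : ℝ≥0∞))
    (ν : Measure X) [IsProbabilityMeasure ν] :
    (((φ 1 + 1)⁻¹ : ℝ≥0) : ℝ≥0∞) ≤ Phi F ν := by
  rcases eq_or_ne (Phi F ν) ∞ with htop | htop
  · simp [htop]
  have h0 : Phi F ν ≠ 0 := fun h0 => by
    simpa [h0, hφ0] using hφ ν inferInstance htop
  have hΦ : Phi F ((Phi F ν)⁻¹ • ν) = 1 := by
    rw [Phi_smul F ν (ENNReal.inv_ne_top.mpr h0), ENNReal.inv_mul_cancel h0 htop]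
  have hinv : (Phi F ν)⁻¹ ≤ φ 1 := by
    simpa [hΦ] using hφ _ (ν.smul_finite (ENNReal.inv_ne_top.mpr h0)) (by simp [hΦ])
  rw [ENNReal.coe_inv (by positivity), ENNReal.inv_le_iff_inv_le]
  exact hinv.trans (by simp)

end Scaling

section Compact

variable {X : Type*} [TopologicalSpace X] [CompactSpace X] [MeasurableSpace X]

lemma lowerSemicontinuous_Phi [OpensMeasurableSpace X] (F : Set C(X, ℝ)) :
    LowerSemicontinuous fun ν : ProbabilityMeasure X => Phi F ν :=
  lowerSemicontinuous_biSup fun f _ => (ENNReal.continuous_ofReal.comp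
    (ProbabilityMeasure.continuous_integral_continuousMap f)).lowerSemicontinuous

lemma exists_pos_le_Phi [T2Space X] [BorelSpace X] {F : Set C(X, ℝ)}
    (hFneg : ∀ f ∈ F, -f ∈ F)
    (h : ∀ μ : Measure X, IsFiniteMeasure μ → (∀ f ∈ F, ∫ x, f x ∂μ = 0) → μ = 0) :
    ∃ m : ℝ≥0, 0 < m ∧ ∀ ν : Measure X, IsProbabilityMeasure ν → (m : ℝ≥0∞) ≤ Phi F ν := by
  rcases isEmpty_or_nonempty (ProbabilityMeasure X) with hX | hX
  · exact ⟨1, one_pos, fun ν hν => (hX.false ⟨ν, hν⟩).elim⟩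
  obtain ⟨ν, -, hν⟩ := ((lowerSemicontinuous_Phi F).lowerSemicontinuousOn
    Set.univ).exists_isMinOn Set.univ_nonempty isCompact_univ
  have hpos : Phi F ν ≠ 0 := fun h0 => IsProbabilityMeasure.ne_zero (ν : Measure X)
    (h ν inferInstance ((Phi_eq_zero_iff hFneg _).mp h0))
  refine ⟨(min (Phi F ν) 1).toNNReal, ENNReal.toNNReal_pos (by simp [hpos]) (by simp),
    fun ν' hν' => ?_⟩
  rw [ENNReal.coe_toNNReal (by simp)]
  exact (min_le_left _ _).trans (hν (Set.mem_univ ⟨ν', hν'⟩))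

end Compact

theorem stmt_1_general {X : Type*} [MetricSpace X] [CompactSpace X]
    [MeasurableSpace X] [BorelSpace X]
    (F : Set C(X, ℝ)) (hFneg : ∀ f ∈ F, -f ∈ F) :
    ((∀ μ : Measure X, IsFiniteMeasure μ →
        (∀ f ∈ F, ∫ x, f x ∂μ = 0) → μ = 0) ↔
      (∃ c : ℝ≥0, ∀ μ : Measure X, IsFiniteMeasure μ →
        μ Set.univ ≤ (c : ℝ≥0∞) * Phi F μ))
    ∧
    ((∃ φ : ℝ≥0 → ℝ≥0, Monotone φ ∧ φ 0 = 0 ∧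
        ∀ μ : Measure X, IsFiniteMeasure μ → Phi F μ ≠ ∞ →
          μ Set.univ ≤ (φ (Phi F μ).toNNReal : ℝ≥0∞)) ↔
      (∃ c : ℝ≥0, ∀ μ : Measure X, IsFiniteMeasure μ →
        μ Set.univ ≤ (c : ℝ≥0∞) * Phi F μ)) := by
  have of_le_Phi : (∃ m : ℝ≥0, 0 < m ∧ ∀ ν : Measure X, IsProbabilityMeasure ν →
      (m : ℝ≥0∞) ≤ Phi F ν) →
      ∃ c : ℝ≥0, ∀ μ : Measure X, IsFiniteMeasure μ → μ Set.univ ≤ c * Phi F μ :=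
    fun ⟨m, hm, h⟩ => ⟨m⁻¹, fun μ _ => measure_univ_le_mul_Phi_of_le_Phi hm h μ⟩
  refine ⟨⟨fun ha => of_le_Phi (exists_pos_le_Phi hFneg ha), ?_⟩,
    ⟨fun ⟨φ, _, hφ0, hφ⟩ => of_le_Phi ⟨_, by positivity,
      fun ν _ => inv_le_Phi_of_measure_univ_le hφ0 hφ ν⟩, ?_⟩⟩
  · rintro ⟨c, hc⟩ μ hμ hint
    rw [← Measure.measure_univ_eq_zero]
    simpa [(Phi_eq_zero_iff hFneg μ).mpr hint] using hc μ hμ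
  · rintro ⟨c, hc⟩
    refine ⟨fun t => c * t, fun s t hst => mul_le_mul_right hst c, mul_zero c,
      fun μ hμ htop => ?_⟩
    simpa [ENNReal.coe_mul, ENNReal.coe_toNNReal htop] using hc μ hμ

theorem stmt_1 {X : Type*} [MetricSpace X] [CompactSpace X]
    [MeasurableSpace X] [BorelSpace X]
    (F : Set C(X, ℝ)) (hF : F.Nonempty) (hFneg : ∀ f ∈ F, -f ∈ F) :
    ((∀ μ : Measure X, IsFiniteMeasure μ →
        (∀ f ∈ F, ∫ x, f x ∂μ = 0) → μ = 0) ↔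
      (∃ c : ℝ≥0, ∀ μ : Measure X, IsFiniteMeasure μ →
        μ Set.univ ≤ (c : ℝ≥0∞) * Phi F μ))
    ∧
    ((∃ φ : ℝ≥0 → ℝ≥0, Monotone φ ∧ φ 0 = 0 ∧
        ∀ μ : Measure X, IsFiniteMeasure μ → Phi F μ ≠ ∞ →
          μ Set.univ ≤ (φ (Phi F μ).toNNReal : ℝ≥0∞)) ↔
      (∃ c : ℝ≥0, ∀ μ : Measure X, IsFiniteMeasure μ →
        μ Set.univ ≤ (c : ℝ≥0∞) * Phi F μ)) :=
  stmt_1_general F hFneg
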